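/- Let κ = ⟨κ₀,…,κ_n⟩ be a tuple of infinite cardinals such that X(κ)⁻ admits a k-Fubini partition. Then H^{k+1}(X(κ)⁻, ℤ/2) = 0; that is, every (k+1)-cocycle for the Čech complex of X(κ)⁻ is a (k+1)-coboundary. -/

import Mathlib

set_option linter.unusedSectionVars false

open Cardinal Function OnePoint

noncomputable section

instance (o : Ordinal) : TopologicalSpace o.ToType := ⊥
instance (o : Ordinal) : DiscreteTopology o.ToType := ⟨rfl⟩
instance : TopologicalSpace (ZMod 2) := ⊥
instance : DiscreteTopology (ZMod 2) := ⟨rfl⟩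

/-- `Alpha c` : the one-point compactification of the discrete space of cardinality `c`. -/
abbrev Alpha (c : Cardinal) : Type := OnePoint c.ord.ToType

variable {ι : Type} [Fintype ι] [DecidableEq ι]

/-- `DD κ A` : the set of points `x ∈ X(κ)` with `x i ≠ ∞` for all `i ∈ A`. -/
def DD (κ : ι → Cardinal) (A : Finset ι) : Set (∀ i, Alpha (κ i)) :=
  {x | ∀ i ∈ A, x i ≠ ∞}

/-- `FF κ A` : the `A`-facet of `X(κ)`. -/
def FF (κ : ι → Cardinal) (A : Finset ι) : Set (∀ i, Alpha (κ i)) :=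
  {x | ∀ i, x i ≠ ∞ ↔ i ∈ A}

/-- `X(κ)⁻`, the complement of the point `(∞,…,∞)`. -/
def Xminus (κ : ι → Cardinal) : Set (∀ i, Alpha (κ i)) :=
  {x | ∃ i, x i ≠ ∞}

/-- A (raw) cochain: a family of functions on the `DD κ A`. -/
abbrev Cochain (κ : ι → Cardinal) : Type :=
  ∀ A : Finset ι, ↥(DD κ A) → ZMod 2

/-- Restriction of a function on `D_A` to `D_B`, for `A ⊆ B`. -/
def res {κ : ι → Cardinal} {A B : Finset ι} (h : A ⊆ B)
    (f : ↥(DD κ A) → ZMod 2) : ↥(DD κ B) → ZMod 2 :=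
  fun x => f ⟨x.1, fun i hi => x.2 i (h hi)⟩

/-- The Čech coboundary `(df)_A = ∑_{i ∈ A} f_{A ∖ {i}}` (restricted to `D_A`). -/
def cb (κ : ι → Cardinal) (f : Cochain κ) : Cochain κ :=
  fun A x => ∑ i ∈ A, res (Finset.erase_subset i A) (f (A.erase i)) x

/-- `f` is a `k`-cochain: each `f_A` for `|A| = k+1` is continuous. -/
def IsCochain (κ : ι → Cardinal) (k : ℕ) (f : Cochain κ) : Prop :=
  ∀ A : Finset ι, A.card = k + 1 → Continuous (f A)

/-- `f` is a `k`-cocycle. -/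
def IsCocycle (κ : ι → Cardinal) (k : ℕ) (f : Cochain κ) : Prop :=
  IsCochain κ k f ∧ ∀ A : Finset ι, A.card = k + 2 → ∀ x, cb κ f A x = 0

/-- `f` is a `k`-coboundary: `f = dg` for some `(k-1)`-cochain `g`. -/
def IsCoboundary (κ : ι → Cardinal) (k : ℕ) (f : Cochain κ) : Prop :=
  ∃ g : Cochain κ, IsCochain κ (k - 1) g ∧
    ∀ A : Finset ι, A.card = k + 1 → ∀ x, f A x = cb κ g A x

/-- `Y` is a `k`-Fubini partition of `X(κ)⁻`. -/
def IsFubini (κ : ι → Cardinal) (k : ℕ) (Y : ι → Set (∀ i, Alpha (κ i))) : Prop :=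
  Pairwise (Disjoint on Y) ∧ (⋃ i, Y i) = Xminus κ ∧
  ∀ A : Finset ι, k + 1 ≤ A.card →
    (∀ i ∉ A, IsClopen ((Subtype.val : ↥(DD κ A) → _) ⁻¹' Y i)) ∧
    {x : ↥(Xminus κ) | (x : ∀ i, Alpha (κ i)) ∈ FF κ A} ⊆
      interior ((Subtype.val : ↥(Xminus κ) → _) ⁻¹' ⋃ i ∈ A, Y i)

/-- `f` is a top-degree coboundary: a sum of functions, each extending continuously to
`D_{univ ∖ {j}}`. -/
def TopCoboundary (κ : ι → Cardinal)
    (f : (∀ i, (κ i).ord.ToType) → ZMod 2) : Prop :=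
  ∃ g : ι → ((∀ i, (κ i).ord.ToType) → ZMod 2),
    (∀ x, f x = ∑ j, g j x) ∧
    ∀ j : ι, ∃ G : ↥(DD κ (Finset.univ.erase j)) → ZMod 2, Continuous G ∧
      ∀ x, g j x = G ⟨fun i => ((x i : (κ i).ord.ToType) : Alpha (κ i)),
        fun i _ => OnePoint.coe_ne_infty (x i)⟩

/-- The group of `k`-cocycles. -/
def Zgrp (κ : ι → Cardinal) (k : ℕ) : AddSubgroup (Cochain κ) :=
  AddSubgroup.closure {f | IsCocycle κ k f}

/-- The group of `k`-coboundaries. -/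
def Bgrp (κ : ι → Cardinal) (k : ℕ) : AddSubgroup (Cochain κ) :=
  AddSubgroup.closure {f | IsCoboundary κ k f}

/-- The `k`-th Čech cohomology group of `X(κ)⁻` with `ℤ/2` coefficients. -/
abbrev Hgrp (κ : ι → Cardinal) (k : ℕ) :=
  ↥(Zgrp κ k) ⧸ (Bgrp κ k).addSubgroupOf (Zgrp κ k)

/-- The cohomology class of a `k`-cocycle. -/
abbrev mkH (κ : ι → Cardinal) (k : ℕ) (f : Cochain κ) (hf : IsCocycle κ k f) : Hgrp κ k :=
  QuotientAddGroup.mk ⟨f, AddSubgroup.subset_closure hf⟩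

/-- Combine a point of `∏_{i ∉ B} α(κ i)` with a point of `∏_{i ∈ B} κ i`. -/
def combineBC (κ : ι → Cardinal) (B : Finset ι)
    (x : ∀ i : {i : ι // i ∉ B}, Alpha (κ i))
    (y : ∀ i : ↥B, (κ (i : ι)).ord.ToType) : ∀ i, Alpha (κ i) :=
  fun i => if h : i ∈ B then ((y ⟨i, h⟩ : (κ i).ord.ToType) : Alpha (κ i)) else x ⟨i, h⟩

lemma combineBC_mem (κ : ι → Cardinal) (B : Finset ι)
    (x : ∀ i : {i : ι // i ∉ B}, Alpha (κ i))
    (y : ∀ i : ↥B, (κ (i : ι)).ord.ToType) : combineBC κ B x y ∈ DD κ B := by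
  intro i hi
  simp only [combineBC, dif_pos hi]
  exact OnePoint.coe_ne_infty _

/-- The point `y^∞` : `y` on coordinates in `B`, `∞` outside `B`. -/
def extendInfty (κ : ι → Cardinal) (B : Finset ι)
    (y : ∀ i : ↥B, (κ (i : ι)).ord.ToType) : ∀ i, Alpha (κ i) :=
  combineBC κ B (fun _ => ∞) y

lemma extendInfty_mem (κ : ι → Cardinal) (B : Finset ι)
    (y : ∀ i : ↥B, (κ (i : ι)).ord.ToType) : extendInfty κ B y ∈ DD κ B :=
  combineBC_mem κ B _ y

/-- The face restriction map `Res^k_B`. -/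
def ResB (κ : ι → Cardinal) (B : Finset ι) (f : Cochain κ) :
    (∀ i : ↥B, (κ (i : ι)).ord.ToType) → ZMod 2 :=
  fun y => f B ⟨extendInfty κ B y, extendInfty_mem κ B y⟩

/-- The map `φ_{f,B}` sending `x` to `f_B(x, ·)`. -/
def phiMap (κ : ι → Cardinal) (B : Finset ι) (f : Cochain κ) :
    (∀ i : {i : ι // i ∉ B}, Alpha (κ i)) → (∀ i : ↥B, (κ (i : ι)).ord.ToType) → ZMod 2 :=
  fun x y => f B ⟨combineBC κ B x y, combineBC_mem κ B x y⟩

/-- Combine a point `x` (used on the first `n-k+1` coordinates) with a tuple `y ∈ Q`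
of values on the last `k` coordinates. -/
def combineQ {n : ℕ} (κ : Fin (n + 1) → Cardinal) (k : ℕ)
    (x : ∀ i, Alpha (κ i))
    (y : ∀ i : {i : Fin (n + 1) // n - k + 1 ≤ (i : ℕ)}, (κ (i : Fin (n + 1))).ord.ToType) :
    ∀ i, Alpha (κ i) :=
  fun i => if h : n - k + 1 ≤ (i : ℕ) then
    ((y ⟨i, h⟩ : (κ i).ord.ToType) : Alpha (κ i)) else x i


/-
Given the partition `Y`, put `g_A(x) = f_{A ∪ {i}}(x)` on `D_A` when `x ∈ Y i` with `i ∉ A` and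
`x i ≠ ∞`, and `g_A(x) = 0` otherwise. For `|A| ≥ k + 1`, the Fubini condition on the facet of the
finite coordinates of `x` shows that the piece `Y i` containing `x` has `x i ≠ ∞`. Hence for
`|A| = k + 1` the pieces, being clopen in `D_A`, make `g_A` continuous; and for `|A| = k + 2`,
`(dg)_A(x)` is `f_A(x)` directly if `i ∈ A`, while if `i ∉ A` it is `Σ_{j ∈ A} f_{A ∪ {i} ∖ {j}}(x)`,
which is `f_A(x)` by the cocycle condition on `A ∪ {i}`.
-/

theorem continuous_dite_of_isClopen {X Z : Type*} [TopologicalSpace X] [TopologicalSpace Z]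
    {p : X → Prop} [DecidablePred p] (hp : IsClopen {x | p x}) {F : ∀ x, p x → Z}
    {G : ∀ x, ¬p x → Z} (hF : Continuous fun x : {x // p x} => F x x.2)
    (hG : Continuous fun x : {x // ¬p x} => G x x.2) :
    Continuous fun x => if h : p x then F x h else G x h := by
  rw [← continuousOn_univ, ← Set.union_compl_self {x | p x}]
  refine .union_of_isOpen ?_ ?_ hp.isOpen hp.compl.isOpen <;>
    rw [continuousOn_iff_continuous_domRestrict]
  · exact hF.congr fun x => (dif_pos x.2).symm
  · exact hG.congr fun x => (dif_neg x.2).symm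

lemma mem_DD_insert {κ : ι → Cardinal} {A : Finset ι} {i : ι} {x : ∀ i, Alpha (κ i)} :
    x ∈ DD κ (insert i A) ↔ x i ≠ ∞ ∧ x ∈ DD κ A :=
  Finset.forall_mem_insert _ _ _

lemma Cochain.congr_face {κ : ι → Cardinal} (f : Cochain κ) {A B : Finset ι} (h : A = B)
    (x : ∀ i, Alpha (κ i)) (hA : x ∈ DD κ A) (hB : x ∈ DD κ B) :
    f A ⟨x, hA⟩ = f B ⟨x, hB⟩ := by
  subst h
  rfl

lemma DD_anti {κ : ι → Cardinal} {A B : Finset ι} (h : A ⊆ B) : DD κ B ⊆ DD κ A :=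
  fun _ hx i hi => hx i (h hi)

lemma cb_apply {κ : ι → Cardinal} (g : Cochain κ) (A : Finset ι) (x : ∀ i, Alpha (κ i))
    (hx : x ∈ DD κ A) :
    cb κ g A ⟨x, hx⟩ = ∑ j ∈ A, g (A.erase j) ⟨x, DD_anti (A.erase_subset j) hx⟩ :=
  rfl

section Fubini

variable {κ : ι → Cardinal} {k : ℕ} {Y : ι → Set (∀ i, Alpha (κ i))}

lemma IsFubini.exists_mem_ne_infty (hY : IsFubini κ k Y) {A : Finset ι} (hA : k + 1 ≤ A.card)
    {x : ∀ i, Alpha (κ i)} (hx : x ∈ DD κ A) : ∃ i, x ∈ Y i ∧ x i ≠ ∞ := by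
  classical
  set A₀ := Finset.univ.filter fun j => x j ≠ ∞
  have hA₀ : k + 1 ≤ A₀.card :=
    hA.trans (Finset.card_le_card fun j hj => Finset.mem_filter.2 ⟨Finset.mem_univ j, hx j hj⟩)
  obtain ⟨j, hj⟩ := Finset.card_pos.1 (k.succ_pos.trans_le hA)
  have hxX : x ∈ Xminus κ := ⟨j, hx j hj⟩
  have hxF : x ∈ FF κ A₀ := fun i => by simp [A₀]
  have hx' := interior_subset ((hY.2.2 A₀ hA₀).2 (show (⟨x, hxX⟩ : ↥(Xminus κ)) ∈ _ from hxF))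
  obtain ⟨i, hi, hxi⟩ := Set.mem_iUnion₂.1 hx'
  exact ⟨i, hxi, (Finset.mem_filter.1 hi).2⟩

lemma IsFubini.eq_of_mem (hY : IsFubini κ k Y) {x : ∀ i, Alpha (κ i)} {i j : ι}
    (hi : x ∈ Y i) (hj : x ∈ Y j) : i = j :=
  subsingleton_setOfPred_mem_iff_pairwise_disjoint.2 hY.1 x hi hj

lemma IsFubini.ne_infty_of_mem (hY : IsFubini κ k Y) {A : Finset ι} (hA : k + 1 ≤ A.card)
    {x : ∀ i, Alpha (κ i)} (hx : x ∈ DD κ A) {i : ι} (hi : x ∈ Y i) : x i ≠ ∞ := by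
  obtain ⟨j, hj, hxj⟩ := hY.exists_mem_ne_infty hA hx
  rwa [hY.eq_of_mem hi hj]

end Fubini

section Primitive

variable {κ : ι → Cardinal} (Y : ι → Set (∀ i, Alpha (κ i))) (f : Cochain κ)

open Classical in
def fubiniPrimitive : Cochain κ :=
  fun A x => ∑ i ∈ Aᶜ, if h : x.1 ∈ Y i ∧ x.1 i ≠ ∞
    then f (insert i A) ⟨x.1, mem_DD_insert.2 ⟨h.2, x.2⟩⟩ else 0

variable {Y} {k : ℕ}

lemma fubiniPrimitive_apply_of_mem (hY : IsFubini κ k Y) {A : Finset ι} {x : ∀ i, Alpha (κ i)}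
    (hx : x ∈ DD κ A) {i : ι} (hxi : x ∈ Y i) (hiA : i ∈ A) :
    fubiniPrimitive Y f A ⟨x, hx⟩ = 0 := by
  refine Finset.sum_eq_zero fun j hj => dif_neg fun h => ?_
  exact Finset.mem_compl.1 hj (hY.eq_of_mem hxi h.1 ▸ hiA)

lemma fubiniPrimitive_apply_of_notMem (hY : IsFubini κ k Y) {A : Finset ι}
    {x : ∀ i, Alpha (κ i)} (hx : x ∈ DD κ A) {i : ι} (hxi : x ∈ Y i) (hi : x i ≠ ∞)
    (hiA : i ∉ A) :
    fubiniPrimitive Y f A ⟨x, hx⟩ = f (insert i A) ⟨x, mem_DD_insert.2 ⟨hi, hx⟩⟩ := by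
  rw [fubiniPrimitive, Finset.sum_eq_single_of_mem i (Finset.mem_compl.2 hiA), dif_pos ⟨hxi, hi⟩]
  exact fun j _ hji => dif_neg fun h => hji (hY.eq_of_mem h.1 hxi)

lemma isCochain_fubiniPrimitive (hY : IsFubini κ k Y) (hf : IsCochain κ (k + 1) f) :
    IsCochain κ k (fubiniPrimitive Y f) := by
  classical
  intro A hA
  refine continuous_finsetSum _ fun i hi => continuous_dite_of_isClopen ?_ ?_ continuous_const
  · have hpiece : {x : ↥(DD κ A) | x.1 ∈ Y i ∧ x.1 i ≠ ∞} = Subtype.val ⁻¹' Y i :=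
      Set.ext fun x => ⟨And.left, fun h => ⟨h, hY.ne_infty_of_mem hA.ge x.2 h⟩⟩
    rw [hpiece]
    exact (hY.2.2 A hA.ge).1 i (Finset.mem_compl.1 hi)
  · have hcard : (insert i A).card = k + 1 + 1 := by
      rw [Finset.card_insert_of_notMem (Finset.mem_compl.1 hi), hA]
    exact (hf _ hcard).comp
      ((continuous_subtype_val.comp continuous_subtype_val).subtype_mk _)

lemma cb_fubiniPrimitive (hY : IsFubini κ k Y) (hf : IsCocycle κ (k + 1) f) {A : Finset ι}
    (hA : A.card = k + 2) (x : ↥(DD κ A)) : f A x = cb κ (fubiniPrimitive Y f) A x := by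
  obtain ⟨x, hx⟩ := x
  obtain ⟨i, hxi, hi⟩ := hY.exists_mem_ne_infty (by omega : k + 1 ≤ A.card) hx
  rw [cb_apply]
  by_cases hiA : i ∈ A
  · rw [Finset.sum_eq_single_of_mem i hiA fun j _ hji =>
      fubiniPrimitive_apply_of_mem f hY _ hxi (Finset.mem_erase.2 ⟨hji.symm, hiA⟩)]
    rw [fubiniPrimitive_apply_of_notMem f hY _ hxi hi (Finset.notMem_erase i A)]
    exact f.congr_face (Finset.insert_erase hiA).symm x _ _
  · have hcocycle := hf.2 (insert i A) (by rw [Finset.card_insert_of_notMem hiA, hA])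
      ⟨x, mem_DD_insert.2 ⟨hi, hx⟩⟩
    rw [cb_apply, Finset.sum_insert hiA, CharTwo.add_eq_zero,
      f.congr_face (Finset.erase_insert hiA) x _ hx] at hcocycle
    rw [hcocycle]
    refine Finset.sum_congr rfl fun j hj => ?_
    rw [fubiniPrimitive_apply_of_notMem f hY _ hxi hi fun h => hiA (Finset.mem_of_mem_erase h)]
    exact f.congr_face (Finset.erase_insert_of_ne (hj.ne_of_notMem hiA).symm) x _ _

end Primitive

theorem stmt9_general (n k : ℕ) (κ : Fin (n + 1) → Cardinal)
    (hfub : ∃ Y : Fin (n + 1) → Set (∀ i, Alpha (κ i)), IsFubini κ k Y)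
    (f : Cochain κ) (hf : IsCocycle κ (k + 1) f) :
    IsCoboundary κ (k + 1) f := by
  obtain ⟨Y, hY⟩ := hfub
  exact ⟨fubiniPrimitive Y f, isCochain_fubiniPrimitive f hY hf.1,
    fun A hA => cb_fubiniPrimitive f hY hf hA⟩

/-- If `X(κ)⁻` admits a `k`-Fubini partition then `H^{k+1}(X(κ)⁻, ℤ/2) = 0`: every
`(k+1)`-cocycle is a `(k+1)`-coboundary. -/
theorem stmt9 (n k : ℕ) (κ : Fin (n + 1) → Cardinal) (hinf : ∀ i, ℵ₀ ≤ κ i)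
    (hfub : ∃ Y : Fin (n + 1) → Set (∀ i, Alpha (κ i)), IsFubini κ k Y)
    (f : Cochain κ) (hf : IsCocycle κ (k + 1) f) :
    IsCoboundary κ (k + 1) f :=
  stmt9_general n k κ hfub f hf

end
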